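/- If R is a real quadratically closed field and x ∈ R^× with x < 0, then ⟨−1⟩[x] = [x] in RP(R). Consequently, the square-class group R^×/(R^×)² acts trivially on the entire refined pre-Bloch group RP(R). -/

import Mathlib

/-!
Write `σ = ⟨-1⟩`. Since positive elements are squares, `⟨x⟩ = 1` for `x > 0` and `⟨x⟩ = σ` for
`x < 0`, and `σ² = 1`. For `x < 0` and `T = (1 - x) / x` the five-term relations `S_{x,1-x}` and
`S_{T,T²}` involve only the points `x, 1 - x, T, T²`, and `σ S_{x,1-x} - S_{T,T²} = σ[x] - [x]`.

For positive arguments look at the defect `D(a) = σ[a] - [a]`, which now vanishes for `a ≤ 0`.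
Applying `σ - 1` to `S_{x,y}` with `x < 0 < y` kills three of its terms and gives `D(y) = D(W)`
for every sufficiently large `W`. So `D` is constant on positive `a ≠ 1`, and `S_{-1/2,-2}`, which
yields `D(1/2) + D(2) = D(4)`, forces that constant to be `0`. Hence `σ` fixes every generator,
and the square class group `{1, σ}` acts trivially.
-/

open scoped Classical

variable (F : Type) [Field F]

/-- The subgroup of squares in `F^×`. -/
def sqSubgroup : Subgroup Fˣ := MonoidHom.range (powMonoidHom 2 : Fˣ →* Fˣ)

/-- The square class group `F^×/(F^×)²`. -/
def SqClassGroup : Type := Fˣ ⧸ sqSubgroup F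

instance : CommGroup (SqClassGroup F) := inferInstanceAs (CommGroup (Fˣ ⧸ sqSubgroup F))

/-- The group ring `R_F = ℤ[F^×/(F^×)²]`. -/
abbrev GrpRing := MonoidAlgebra ℤ (SqClassGroup F)

/-- `⟨x⟩ ∈ R_F`, the square class of `x ∈ F^×` (with the junk convention `⟨0⟩ = 1`). -/
noncomputable def cls (x : F) : GrpRing F :=
  if h : x = 0 then 1
  else MonoidAlgebra.of ℤ (SqClassGroup F)
    (QuotientGroup.mk (Units.mk0 x h) : Fˣ ⧸ sqSubgroup F)

/-- The relators of the refined pre-Bloch group: `[0]`, `[1]` and the refined five-term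
relators `S_{x,y}`, inside the free `R_F`-module on the set `F` of generator labels. -/
noncomputable def refinedRels : Set (F →₀ GrpRing F) :=
  {Finsupp.single (0 : F) 1, Finsupp.single (1 : F) 1} ∪
  {z | ∃ x y : F, x ≠ 0 ∧ x ≠ 1 ∧ y ≠ 0 ∧ y ≠ 1 ∧ x ≠ y ∧
    z = Finsupp.single x 1 - Finsupp.single y 1
        + Finsupp.single (y / x) (cls F x)
        - Finsupp.single ((1 - x⁻¹) / (1 - y⁻¹)) (cls F (x⁻¹ - 1))
        + Finsupp.single ((1 - x) / (1 - y)) (cls F (1 - x))}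

/-- The refined pre-Bloch group `RP(F)`: the `R_F`-module with generators `[x]`, `x ∈ F^×`,
subject to `[1] = 0` and the refined five-term relations `S_{x,y}`. -/
abbrev RP := (F →₀ GrpRing F) ⧸ Submodule.span (GrpRing F) (refinedRels F)

/-- The generator `[x]` of `RP(F)`. -/
noncomputable def gen (x : F) : RP F :=
  Submodule.Quotient.mk (Finsupp.single x 1)

/-- `ψ₁(x) = [x] + ⟨-1⟩[x⁻¹]`. -/
noncomputable def psi1 (x : F) : RP F := gen F x + cls F (-1) • gen F x⁻¹

/-- `ψ₂(x) = ⟨x⁻¹-1⟩[x] + ⟨1-x⟩[x⁻¹]` for `x ≠ 1`, and `ψ₂(1) = 0`. -/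
noncomputable def psi2 (x : F) : RP F :=
  if x = 1 then 0 else cls F (x⁻¹ - 1) • gen F x + cls F (1 - x) • gen F x⁻¹

section Field

variable {F : Type} [Field F]

lemma cls_of_ne_zero {x : F} (hx : x ≠ 0) :
    cls F x = MonoidAlgebra.of ℤ (SqClassGroup F)
      (QuotientGroup.mk (Units.mk0 x hx) : Fˣ ⧸ sqSubgroup F) :=
  dif_neg hx

lemma cls_mul {x y : F} (hx : x ≠ 0) (hy : y ≠ 0) :
    cls F (x * y) = cls F x * cls F y := by
  rw [cls_of_ne_zero hx, cls_of_ne_zero hy, cls_of_ne_zero (mul_ne_zero hx hy)]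
  refine (congrArg (MonoidAlgebra.of ℤ (SqClassGroup F)) ?_).trans (map_mul _ _ _)
  exact congrArg QuotientGroup.mk (Units.ext rfl)

lemma cls_sq {x : F} (hx : x ≠ 0) : cls F (x ^ 2) = 1 := by
  have hsq : Units.mk0 (x ^ 2) (pow_ne_zero 2 hx) ∈ sqSubgroup F :=
    ⟨Units.mk0 x hx, by ext; simp [powMonoidHom]⟩
  rw [cls_of_ne_zero (pow_ne_zero 2 hx), (QuotientGroup.eq_one_iff _).2 hsq]
  exact map_one _

lemma cls_neg_one_mul_self : cls F (-1) * cls F (-1) = 1 := by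
  have h : (-1 : F) ≠ 0 := neg_ne_zero.2 one_ne_zero
  rw [← cls_mul h h, ← sq, cls_sq h]

lemma cls_neg_one_smul_smul (m : RP F) : cls F (-1) • cls F (-1) • m = m := by
  rw [smul_smul, cls_neg_one_mul_self, one_smul]

lemma mk_single_eq_smul_gen (a : F) (r : GrpRing F) :
    (Submodule.Quotient.mk (Finsupp.single a r) : RP F) = r • gen F a := by
  rw [gen, ← Submodule.Quotient.mk_smul, Finsupp.smul_single, smul_eq_mul, mul_one]

lemma gen_zero : gen F 0 = 0 :=
  (Submodule.Quotient.mk_eq_zero _).2 (Submodule.subset_span (Or.inl (Or.inl rfl)))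

lemma gen_one : gen F 1 = 0 :=
  (Submodule.Quotient.mk_eq_zero _).2 (Submodule.subset_span (Or.inl (Or.inr rfl)))

lemma five_term {x y : F} (hx0 : x ≠ 0) (hx1 : x ≠ 1) (hy0 : y ≠ 0) (hy1 : y ≠ 1)
    (hxy : x ≠ y) :
    gen F x - gen F y + cls F x • gen F (y / x)
      - cls F (x⁻¹ - 1) • gen F ((1 - x⁻¹) / (1 - y⁻¹))
      + cls F (1 - x) • gen F ((1 - x) / (1 - y)) = 0 := by
  have h := (Submodule.Quotient.mk_eq_zero _).2
    (Submodule.subset_span (Or.inr ⟨x, y, hx0, hx1, hy0, hy1, hxy, rfl⟩) :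
      _ ∈ Submodule.span (GrpRing F) (refinedRels F))
  simpa only [Submodule.Quotient.mk_add, Submodule.Quotient.mk_sub, mk_single_eq_smul_gen,
    one_smul] using h

noncomputable def defect (a : F) : RP F := (cls F (-1) - 1) • gen F a

lemma defect_eq_zero_iff (a : F) : defect a = 0 ↔ cls F (-1) • gen F a = gen F a := by
  rw [defect, sub_smul, one_smul, sub_eq_zero]

lemma cls_neg_one_smul_defect (a : F) : cls F (-1) • defect a = -defect a := by
  rw [defect, smul_smul, mul_sub, cls_neg_one_mul_self, mul_one, ← neg_sub, neg_smul]

lemma defect_five_term {x y : F} (hx0 : x ≠ 0) (hx1 : x ≠ 1) (hy0 : y ≠ 0) (hy1 : y ≠ 1)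
    (hxy : x ≠ y) :
    defect x - defect y + cls F x • defect (y / x)
      - cls F (x⁻¹ - 1) • defect ((1 - x⁻¹) / (1 - y⁻¹))
      + cls F (1 - x) • defect ((1 - x) / (1 - y)) = 0 := by
  have h := congrArg ((cls F (-1) - 1) • ·) (five_term hx0 hx1 hy0 hy1 hxy)
  simpa only [defect, smul_add, smul_sub, smul_zero, smul_comm (cls F (-1) - 1)] using h

end Field

section QuadraticallyClosed

variable {R : Type} [Field R] [LinearOrder R]

lemma cls_eq_one_of_pos (hR : ∀ x : R, 0 < x → ∃ a : R, a ^ 2 = x) {x : R} (hx : 0 < x) :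
    cls R x = 1 := by
  obtain ⟨a, rfl⟩ := hR x hx
  exact cls_sq (by rintro rfl; simp at hx)

variable [IsStrictOrderedRing R]

lemma cls_eq_cls_neg_one_of_neg (hR : ∀ x : R, 0 < x → ∃ a : R, a ^ 2 = x) {x : R}
    (hx : x < 0) : cls R x = cls R (-1) := by
  rw [show x = -1 * -x by ring, cls_mul (by norm_num) (by linarith),
    cls_eq_one_of_pos hR (neg_pos.2 hx), mul_one]

lemma five_term_one_sub (hR : ∀ x : R, 0 < x → ∃ a : R, a ^ 2 = x) {x : R} (hx : x < 0) :
    gen R x - gen R (1 - x) + cls R (-1) • gen R ((1 - x) / x)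
      - cls R (-1) • gen R (((1 - x) / x) ^ 2) + gen R ((1 - x) / x) = 0 := by
  have hx0 : x ≠ 0 := hx.ne
  have h1x : 0 < 1 - x := by linarith
  have h := five_term (y := 1 - x) hx0 (by linarith) h1x.ne' (by linarith) (by linarith)
  have hA : (1 - x⁻¹) / (1 - (1 - x)⁻¹) = ((1 - x) / x) ^ 2 := by
    rw [div_eq_iff (sub_ne_zero.2 (inv_ne_one.2 (by linarith)).symm)]
    field_simp
    ring
  rwa [show x⁻¹ - 1 = (1 - x) / x by field_simp, hA, show 1 - (1 - x) = x by ring,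
    cls_eq_cls_neg_one_of_neg hR hx,
    cls_eq_cls_neg_one_of_neg hR (div_neg_of_pos_of_neg h1x hx),
    cls_eq_one_of_pos hR h1x, one_smul] at h

lemma five_term_sq (hR : ∀ x : R, 0 < x → ∃ a : R, a ^ 2 = x) {x : R} (hx : x < 0) :
    gen R ((1 - x) / x) - gen R (((1 - x) / x) ^ 2) + cls R (-1) • gen R ((1 - x) / x)
      - cls R (-1) • gen R (1 - x) + gen R x = 0 := by
  have hx0 : x ≠ 0 := hx.ne
  have h1x : 1 - x ≠ 0 := by linarith
  have hT : (1 - x) / x < -1 := by rw [div_lt_iff_of_neg hx]; linarith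
  have hT2 : ((1 - x) / x) ^ 2 ≠ 1 := (show 1 < ((1 - x) / x) ^ 2 by nlinarith).ne'
  have h := five_term (x := (1 - x) / x) (y := ((1 - x) / x) ^ 2) (by linarith) (by linarith)
    (pow_ne_zero 2 (by linarith)) hT2 (by nlinarith)
  have hA : (1 - ((1 - x) / x)⁻¹) / (1 - (((1 - x) / x) ^ 2)⁻¹) = 1 - x := by
    rw [div_eq_iff (sub_ne_zero.2 (inv_ne_one.2 hT2).symm)]
    field_simp
    ring
  have hB : (1 - (1 - x) / x) / (1 - ((1 - x) / x) ^ 2) = x := by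
    rw [div_eq_iff (sub_ne_zero.2 hT2.symm)]
    field_simp
    ring
  have hTinv : ((1 - x) / x)⁻¹ - 1 < 0 := by
    linarith [inv_lt_zero.2 (show (1 - x) / x < 0 by linarith)]
  rwa [show ((1 - x) / x) ^ 2 / ((1 - x) / x) = (1 - x) / x by field_simp, hA, hB,
    cls_eq_cls_neg_one_of_neg hR (show (1 - x) / x < 0 by linarith),
    cls_eq_cls_neg_one_of_neg hR hTinv,
    cls_eq_one_of_pos hR (show 0 < 1 - (1 - x) / x by linarith), one_smul] at h

lemma cls_neg_one_smul_gen_of_neg (hR : ∀ x : R, 0 < x → ∃ a : R, a ^ 2 = x) {x : R}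
    (hx : x < 0) : cls R (-1) • gen R x = gen R x := by
  have hF := congrArg (cls R (-1) • ·) (five_term_one_sub hR hx)
  simp only [smul_add, smul_sub, smul_zero, cls_neg_one_smul_smul] at hF
  linear_combination (norm := module) hF - five_term_sq hR hx

lemma defect_of_nonpos (hR : ∀ x : R, 0 < x → ∃ a : R, a ^ 2 = x) {x : R} (hx : x ≤ 0) :
    defect x = 0 := by
  rcases hx.lt_or_eq with hx | rfl
  · exact (defect_eq_zero_iff x).2 (cls_neg_one_smul_gen_of_neg hR hx)
  · rw [defect, gen_zero, smul_zero]

lemma defect_eq_of_neg_of_lt_one (hR : ∀ x : R, 0 < x → ∃ a : R, a ^ 2 = x) {x y : R}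
    (hx : x < 0) (hy0 : 0 < y) (hy1 : y < 1) : defect ((1 - x) / (1 - y)) = defect y := by
  have h := defect_five_term hx.ne (by linarith) hy0.ne' hy1.ne (by linarith)
  have hA : (1 - x⁻¹) / (1 - y⁻¹) < 0 := div_neg_of_pos_of_neg
    (by linarith [inv_lt_zero.2 hx]) (by linarith [one_lt_inv_iff₀.2 ⟨hy0, hy1⟩])
  rw [defect_of_nonpos hR hx.le, defect_of_nonpos hR (div_neg_of_pos_of_neg hy0 hx).le,
    defect_of_nonpos hR hA.le, cls_eq_one_of_pos hR (by linarith : 0 < 1 - x), one_smul] at h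
  linear_combination (norm := module) h

lemma defect_eq_of_neg_of_one_lt (hR : ∀ x : R, 0 < x → ∃ a : R, a ^ 2 = x) {x y : R}
    (hx : x < 0) (hy : 1 < y) : defect ((1 - x⁻¹) / (1 - y⁻¹)) = defect y := by
  have h := defect_five_term hx.ne (by linarith) (by linarith) hy.ne' (by linarith)
  have hB : (1 - x) / (1 - y) < 0 := div_neg_of_pos_of_neg (by linarith) (by linarith)
  rw [defect_of_nonpos hR hx.le, defect_of_nonpos hR (div_neg_of_pos_of_neg (by linarith) hx).le,
    defect_of_nonpos hR hB.le,
    cls_eq_cls_neg_one_of_neg hR (by linarith [inv_lt_zero.2 hx] : x⁻¹ - 1 < 0),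
    cls_neg_one_smul_defect] at h
  linear_combination (norm := module) h

lemma eventually_defect_eq (hR : ∀ x : R, 0 < x → ∃ a : R, a ^ 2 = x) {y : R} (hy0 : 0 < y)
    (hy1 : y ≠ 1) : ∀ᶠ W in Filter.atTop, defect W = defect y := by
  rcases hy1.lt_or_gt with hy1 | hy1
  · filter_upwards [Filter.eventually_gt_atTop (1 - y)⁻¹] with W hW
    have h1y : 0 < 1 - y := by linarith
    have hx : 1 - W * (1 - y) < 0 := by
      rw [inv_lt_iff_one_lt_mul₀ h1y] at hW; linarith
    convert defect_eq_of_neg_of_lt_one hR hx hy0 hy1 using 2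
    field_simp
    ring
  · filter_upwards [Filter.eventually_gt_atTop (1 - y⁻¹)⁻¹] with W hW
    have h1y : 0 < 1 - y⁻¹ := by linarith [inv_lt_one_of_one_lt₀ hy1]
    have hx : (1 - W * (1 - y⁻¹))⁻¹ < 0 := by
      rw [inv_lt_iff_one_lt_mul₀ h1y] at hW
      exact inv_lt_zero.2 (by linarith)
    convert defect_eq_of_neg_of_one_lt hR hx hy1 using 2
    rw [inv_inv, sub_sub_cancel, mul_div_cancel_right₀ _ h1y.ne']

lemma defect_eq_defect (hR : ∀ x : R, 0 < x → ∃ a : R, a ^ 2 = x) {y z : R} (hy0 : 0 < y)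
    (hy1 : y ≠ 1) (hz0 : 0 < z) (hz1 : z ≠ 1) : defect y = defect z := by
  obtain ⟨W, hWy, hWz⟩ :=
    ((eventually_defect_eq hR hy0 hy1).and (eventually_defect_eq hR hz0 hz1)).exists
  rw [← hWy, hWz]

lemma defect_half_add_defect_two (hR : ∀ x : R, 0 < x → ∃ a : R, a ^ 2 = x) :
    defect (1 / 2 : R) + defect 2 = defect 4 := by
  have h := defect_five_term (x := (-1 / 2 : R)) (y := -2) (by norm_num) (by norm_num)
    (by norm_num) (by norm_num) (by norm_num)
  norm_num at h
  rw [defect_of_nonpos hR (by norm_num), defect_of_nonpos hR (by norm_num),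
    cls_eq_cls_neg_one_of_neg hR (x := -(1 / 2)) (by norm_num),
    cls_eq_cls_neg_one_of_neg hR (x := -3) (by norm_num),
    cls_eq_one_of_pos hR (x := 3 / 2) (by norm_num), cls_neg_one_smul_defect,
    cls_neg_one_smul_defect, one_smul] at h
  linear_combination (norm := module) h

lemma defect_of_pos (hR : ∀ x : R, 0 < x → ∃ a : R, a ^ 2 = x) {y : R} (hy : 0 < y) :
    defect y = 0 := by
  rcases eq_or_ne y 1 with rfl | hy1
  · rw [defect, gen_one, smul_zero]
  have h := defect_half_add_defect_two hR
  rw [defect_eq_defect hR (by norm_num) (by norm_num) hy hy1,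
    defect_eq_defect hR (by norm_num : (0 : R) < 2) (by norm_num) hy hy1,
    defect_eq_defect hR (by norm_num : (0 : R) < 4) (by norm_num) hy hy1] at h
  simpa using h

lemma cls_neg_one_smul_gen (hR : ∀ x : R, 0 < x → ∃ a : R, a ^ 2 = x) (x : R) :
    cls R (-1) • gen R x = gen R x := by
  rw [← defect_eq_zero_iff]
  rcases le_or_gt x 0 with hx | hx
  · exact defect_of_nonpos hR hx
  · exact defect_of_pos hR hx

lemma cls_neg_one_smul (hR : ∀ x : R, 0 < x → ∃ a : R, a ^ 2 = x) (m : RP R) :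
    cls R (-1) • m = m := by
  induction m using Submodule.Quotient.induction_on with | H f => ?_
  induction f using Finsupp.induction_linear with
  | zero => rw [Submodule.Quotient.mk_zero, smul_zero]
  | add f g hf hg => rw [Submodule.Quotient.mk_add, smul_add, hf, hg]
  | single a r => rw [mk_single_eq_smul_gen, smul_comm, cls_neg_one_smul_gen hR]

end QuadraticallyClosed

/-- If `R` is a real quadratically closed field and `x < 0` then `⟨-1⟩[x] = [x]` in `RP(R)`.
Consequently, the square class group `R^×/(R^×)²` acts trivially on all of `RP(R)`. -/
theorem cls_neg_one_smul_gen_neg_and_trivial_action (R : Type) [Field R] [LinearOrder R] [IsStrictOrderedRing R]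
    (hRQC : ∀ x : R, 0 < x → ∃ a : R, a ^ 2 = x) :
    (∀ x : R, x < 0 → cls R (-1) • gen R x = gen R x) ∧
    (∀ x : R, x ≠ 0 → ∀ m : RP R, cls R x • m = m) := by
  refine ⟨fun x hx => cls_neg_one_smul_gen_of_neg hRQC hx, fun x hx m => ?_⟩
  rcases hx.lt_or_gt with hx | hx
  · rw [cls_eq_cls_neg_one_of_neg hRQC hx, cls_neg_one_smul hRQC]
  · rw [cls_eq_one_of_pos hRQC hx, one_smul]
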